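/- arXiv:1608.00079 — 2 statements merged into one kernel-verified Lean document; each statement's English description precedes it below -/
import Mathlib

section
/- Suppose positive integers v, e, f, k, d1, d2, f1 satisfy v - e + f = 2, 2e = k·v, 2e = f1·d1 + (f-f1)·d2, with d1 > d2 ≥ 3 and k ≥ 3. Then (e/(k·d2))·(4 - (k-2)(d2-2)) = 2 + f1·(d1-d2)/d2 as rational numbers; in particular if f1 ≥ 1 then (k-2)(d2-2) ≤ 3. -/
/-! Eliminating `v` and `f` from Euler's formula with the two handshake identities
`2e = kv` and `2e = f₁d₁ + (f - f₁)d₂` leaves the single relation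
`e (4 - (k-2)(d₂-2)) = k (2d₂ + f₁(d₁-d₂))`. Its right side is positive when `d₁ > d₂`,
so `(k-2)(d₂-2) < 4`. -/

theorem euler_handshake_identity {R : Type*} [CommRing R] {v e f k d1 d2 f1 : R}
    (euler : v - e + f = 2) (handV : 2 * e = k * v)
    (handF : 2 * e = f1 * d1 + (f - f1) * d2) :
    e * (4 - (k - 2) * (d2 - 2)) = k * (2 * d2 + f1 * (d1 - d2)) := by
  linear_combination (k * d2) * euler + d2 * handV + k * handF

theorem master_identity_general (v e f k d1 d2 f1 : ℤ)
    (he : 0 < e)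
    (hk : 3 ≤ k) (hd2 : 3 ≤ d2) (hd : d2 < d1)
    (euler : v - e + f = 2) (handV : 2 * e = k * v)
    (handF : 2 * e = f1 * d1 + (f - f1) * d2) :
    ((e : ℚ) / ((k : ℚ) * (d2 : ℚ))) * (4 - ((k : ℚ) - 2) * ((d2 : ℚ) - 2))
        = 2 + (f1 : ℚ) * ((d1 : ℚ) - (d2 : ℚ)) / (d2 : ℚ) ∧
      (1 ≤ f1 → (k - 2) * (d2 - 2) ≤ 3) := by
  refine ⟨?_, fun hf1 => ?_⟩
  · have key : (e : ℚ) * (4 - (k - 2) * (d2 - 2)) = k * (2 * d2 + f1 * (d1 - d2)) :=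
      euler_handshake_identity (v := (v : ℚ)) (f := (f : ℚ))
        (by exact_mod_cast euler) (by exact_mod_cast handV) (by exact_mod_cast handF)
    have hk0 : (k : ℚ) ≠ 0 := by positivity
    have hd0 : (d2 : ℚ) ≠ 0 := by positivity
    field_simp
    linear_combination key
  · have hpos : 0 < e * (4 - (k - 2) * (d2 - 2)) := by
      rw [euler_handshake_identity euler handV handF]
      have : 0 < d1 - d2 := by omega
      positivity
    have := pos_of_mul_pos_right hpos he.le
    omega

theorem master_identity (v e f k d1 d2 f1 : ℤ)
    (hv : 0 < v) (he : 0 < e) (hf : 0 < f) (hf1 : 0 ≤ f1)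
    (hk : 3 ≤ k) (hd2 : 3 ≤ d2) (hd : d2 < d1)
    (euler : v - e + f = 2) (handV : 2 * e = k * v)
    (handF : 2 * e = f1 * d1 + (f - f1) * d2) :
    ((e : ℚ) / ((k : ℚ) * (d2 : ℚ))) * (4 - ((k : ℚ) - 2) * ((d2 : ℚ) - 2))
        = 2 + (f1 : ℚ) * ((d1 : ℚ) - (d2 : ℚ)) / (d2 : ℚ) ∧
      (1 ≤ f1 → (k - 2) * (d2 - 2) ≤ 3) :=
  master_identity_general v e f k d1 d2 f1 he hk hd2 hd euler handV handF
end

section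
/- If integers k ≥ 3 and d2 ≥ 3 satisfy (k-2)(d2-2) = 4 (the 'Euclidean' case), then there are no positive integers v, e, f, f1, d1 with f1 ≤ 3, d1 ≥ 3, d1 ≠ d2 satisfying v - e + f = 2, 2e = kv, and 2e = f1·d1 + (f-f1)·d2. -/
/-!
Multiplying Euler's formula by `k` and eliminating `v` and `f` through the two double-counting
identities gives `e * (4 - (k - 2) * (d₂ - 2)) = k * (2 * d₂ + f₁ * (d₁ - d₂))`. In the Euclidean
case the left side vanishes, while for `f₁ ≤ 3` and `d₂ ≤ 6` the right factor is positive.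
-/

/-- `d₂ · Φ(f₁, d₁, d₂)` in the paper's notation, where `Φ(f₁, d₁, d₂) = 2 + f₁ (d₁ - d₂) / d₂`. -/
def scaledPhi {R : Type*} [CommRing R] (f₁ d₁ d₂ : R) : R :=
  2 * d₂ + f₁ * (d₁ - d₂)

theorem master_identity_s19 {R : Type*} [CommRing R] {k d₁ d₂ v e f f₁ : R}
    (euler : v - e + f = 2) (hvertex : 2 * e = k * v)
    (hface : 2 * e = f₁ * d₁ + (f - f₁) * d₂) :
    e * (4 - (k - 2) * (d₂ - 2)) = k * scaledPhi f₁ d₁ d₂ := by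
  unfold scaledPhi
  linear_combination k * d₂ * euler + d₂ * hvertex + k * hface

section Ordered

variable {R : Type*} [CommRing R] [LinearOrder R] [IsStrictOrderedRing R]

theorem scaledPhi_pos {f₁ d₁ d₂ : R} (hf₁ : 0 ≤ f₁) (hf₁3 : f₁ ≤ 3) (hd₁ : 3 ≤ d₁)
    (hd₂ : 0 < d₂) (hd₂9 : d₂ < 9) : 0 < scaledPhi f₁ d₁ d₂ := by
  -- `3 · scaledPhi f₁ d₁ d₂ = (3 - f₁) · 2d₂ + f₁ · (3d₁ - d₂)` interpolates between `f₁ = 0` and `f₁ = 3`.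
  have h3 : 3 * scaledPhi f₁ d₁ d₂ = (3 - f₁) * (2 * d₂) + f₁ * (3 * d₁ - d₂) := by
    unfold scaledPhi; ring
  rcases hf₁.eq_or_lt with rfl | hf₁pos
  · simp only [scaledPhi, zero_mul, add_zero]
    positivity
  · nlinarith [mul_pos hf₁pos (show 0 < 3 * d₁ - d₂ by linarith), mul_nonneg (sub_nonneg.2 hf₁3) hd₂.le]

theorem pos_and_le_six_of_euclidean {k d₂ : R} (hk : 3 ≤ k) (heuc : (k - 2) * (d₂ - 2) = 4) :
    0 < d₂ ∧ d₂ ≤ 6 := by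
  have hd₂ : 0 < d₂ - 2 := pos_of_mul_pos_right (by rw [heuc]; norm_num) (by linarith)
  constructor <;> nlinarith

end Ordered

theorem no_euclidean_nearly_platonic_general (k d2 : ℤ) (hk : 3 ≤ k)
    (heuc : (k - 2) * (d2 - 2) = 4) :
    ¬ ∃ (v e f f1 d1 : ℤ), 0 < v ∧ 0 < e ∧ 0 < f ∧ 0 < f1 ∧ f1 ≤ 3 ∧
      3 ≤ d1 ∧ d1 ≠ d2 ∧ v - e + f = 2 ∧ 2 * e = k * v ∧
      2 * e = f1 * d1 + (f - f1) * d2 := by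
  rintro ⟨v, e, f, f1, d1, -, -, -, hf1, hf13, hd1, -, euler, hvertex, hface⟩
  obtain ⟨hd2, hd26⟩ := pos_and_le_six_of_euclidean hk heuc
  have hmaster := master_identity_s19 euler hvertex hface
  rw [heuc, sub_self, mul_zero, eq_comm] at hmaster
  have hphi : scaledPhi f1 d1 d2 = 0 := (mul_eq_zero.mp hmaster).resolve_left (by omega)
  exact (scaledPhi_pos hf1.le hf13 hd1 hd2 (by omega)).ne' hphi

theorem no_euclidean_nearly_platonic (k d2 : ℤ) (hk : 3 ≤ k) (hd2 : 3 ≤ d2)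
    (heuc : (k - 2) * (d2 - 2) = 4) :
    ¬ ∃ (v e f f1 d1 : ℤ), 0 < v ∧ 0 < e ∧ 0 < f ∧ 0 < f1 ∧ f1 ≤ 3 ∧
      3 ≤ d1 ∧ d1 ≠ d2 ∧ v - e + f = 2 ∧ 2 * e = k * v ∧
      2 * e = f1 * d1 + (f - f1) * d2 :=
  no_euclidean_nearly_platonic_general k d2 hk heuc
end
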